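/- If a is a nonzero real eigenvalue of ♯F, then every nonzero real eigenvalue a′ of ♯F satisfies a′ = a or a′ = −a. -/

import Mathlib

open Matrix BigOperators

noncomputable section

/-- The Minkowski metric `η = diag(−1,1,…,1)` on `ℝ^{n,1}`. -/
def eta (n : ℕ) : Matrix (Fin (n+1)) (Fin (n+1)) ℝ :=
  Matrix.diagonal (fun i => if (i : ℕ) = 0 then -1 else 1)

/-- `dx^μ dx^ν`: the antisymmetric matrix with `(μ,ν)` entry `+1`,
`(ν,μ)` entry `−1`, all other entries `0`. -/
def dx (n μ ν : ℕ) : Matrix (Fin (n+1)) (Fin (n+1)) ℝ :=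
  Matrix.of fun i j =>
    if (i : ℕ) = μ ∧ (j : ℕ) = ν then 1
    else if (i : ℕ) = ν ∧ (j : ℕ) = μ then -1 else 0

/-- The operator `♯F = η⁻¹ F` as a complex matrix acting on `ℂ^{n+1}`. -/
def sharp {n : ℕ} (F : Matrix (Fin (n+1)) (Fin (n+1)) ℝ) :
    Matrix (Fin (n+1)) (Fin (n+1)) ℂ :=
  ((eta n)⁻¹ * F).map (Complex.ofReal)

/-- The bilinear form `η` extended complex-bilinearly to `ℂ^{n+1}`. -/
def etaC {n : ℕ} (v w : Fin (n+1) → ℂ) : ℂ :=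
  ∑ i : Fin (n+1), (if (i : ℕ) = 0 then (-1 : ℂ) else 1) * v i * w i

/-- The bilinear form `η` on `ℝ^{n+1}`. -/
def etaR {n : ℕ} (v w : Fin (n+1) → ℝ) : ℝ :=
  ∑ i : Fin (n+1), (if (i : ℕ) = 0 then (-1 : ℝ) else 1) * v i * w i

/-- `v` is an eigenvector of `M` with eigenvalue `lam`. -/
def IsEigenpair {n : ℕ} (M : Matrix (Fin (n+1)) (Fin (n+1)) ℂ) (lam : ℂ)
    (v : Fin (n+1) → ℂ) : Prop :=
  v ≠ 0 ∧ M.mulVec v = lam • v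

/-- `lam` is an eigenvalue of the matrix `M`. -/
def HasEigenvalue' {n : ℕ} (M : Matrix (Fin (n+1)) (Fin (n+1)) ℂ) (lam : ℂ) : Prop :=
  ∃ v, IsEigenpair M lam v

lemma eta_mul_eta (n : ℕ) : eta n * eta n = 1 := by
  have : (fun i : Fin (n+1) => (if (i:ℕ)=0 then (-1:ℝ) else 1) * (if (i:ℕ)=0 then (-1:ℝ) else 1))
      = fun _ => (1:ℝ) := by funext i; split <;> norm_num
  rw [eta, Matrix.diagonal_mul_diagonal, this, Matrix.diagonal_one]

lemma eta_inv (n : ℕ) : (eta n)⁻¹ = eta n :=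
  Matrix.inv_eq_left_inv (eta_mul_eta n)

lemma eta_transpose (n : ℕ) : (eta n)ᵀ = eta n := by
  simp [eta]

lemma etaR_eq {n : ℕ} (v w : Fin (n+1) →  ℝ) : etaR v w = v ⬝ᵥ (eta n) *ᵥ w := by
  unfold etaR dotProduct
  simp only [eta, Matrix.mulVec_diagonal]
  congr 1; funext i; ring

lemma skew {n : ℕ} (F : Matrix (Fin (n+1)) (Fin (n+1)) ℝ) (hF : Fᵀ = -F)
    (u w : Fin (n+1) → ℝ) :
    etaR ((eta n * F) *ᵥ u) w = -(etaR u ((eta n * F) *ᵥ w)) := by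
  rw [etaR_eq, etaR_eq]
  rw [show ((eta n * F) *ᵥ u) ⬝ᵥ (eta n *ᵥ w) = u ⬝ᵥ ((eta n * F)ᵀ * eta n) *ᵥ w from ?_]
  · rw [Matrix.transpose_mul, eta_transpose, hF, Matrix.mul_assoc, eta_mul_eta,
      Matrix.mul_one, Matrix.mulVec_mulVec, ← Matrix.mul_assoc, eta_mul_eta, Matrix.one_mul,
      Matrix.neg_mulVec, dotProduct_neg]
  · rw [dotProduct_comm, Matrix.dotProduct_mulVec, ← Matrix.mulVec_transpose,
      dotProduct_comm, Matrix.mulVec_mulVec]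

lemma etaR_smul_left {n : ℕ} (a : ℝ) (u w : Fin (n+1) → ℝ) :
    etaR (a • u) w = a * etaR u w := by
  unfold etaR
  rw [Finset.mul_sum]
  refine Finset.sum_congr rfl fun i _ => ?_
  simp only [Pi.smul_apply, smul_eq_mul]; ring

lemma etaR_smul_right {n : ℕ} (a : ℝ) (u w : Fin (n+1) → ℝ) :
    etaR u (a • w) = a * etaR u w := by
  unfold etaR
  rw [Finset.mul_sum]
  refine Finset.sum_congr rfl fun i _ => ?_
  simp only [Pi.smul_apply, smul_eq_mul]; ring

/-- A null vector with vanishing time component is zero. -/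
lemma null_time_zero {n : ℕ} (s : Fin (n+1) → ℝ) (hs0 : s 0 = 0)
    (hss : etaR s s = 0) : s = 0 := by
  have hnonneg : ∀ i ∈ (Finset.univ : Finset (Fin (n+1))),
      0 ≤ (if (i : ℕ) = 0 then (-1 : ℝ) else 1) * s i * s i := by
    intro i _
    by_cases h : (i : ℕ) = 0
    · have hi : i = 0 := by
        apply Fin.ext; simpa using h
      simp [h, hi, hs0]
    · rw [if_neg h, one_mul]
      exact mul_self_nonneg _
  have hall := (Finset.sum_eq_zero_iff_of_nonneg hnonneg).mp hss
  funext i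
  by_cases h : (i : ℕ) = 0
  · have hi : i = 0 := by
      apply Fin.ext; simpa using h
    simpa [hi] using hs0
  · have h1 := hall i (Finset.mem_univ i)
    rw [if_neg h, one_mul] at h1
    exact mul_self_eq_zero.mp h1

/-- Two nonzero mutually orthogonal null vectors in Minkowski space are proportional. -/
lemma null_orthogonal_dependent {n : ℕ} (u w : Fin (n+1) → ℝ) (hu : u ≠ 0)
    (huu : etaR u u = 0) (hww : etaR w w = 0) (huw : etaR u w = 0) :
    ∃ c : ℝ, w = c • u := by
  have hu0 : u 0 ≠ 0 := by
    intro h0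
    exact hu (null_time_zero u h0 huu)
  set s : Fin (n+1) → ℝ := w 0 • u - u 0 • w with hs
  have hs0 : s 0 = 0 := by simp [hs]; ring
  have hss : etaR s s = 0 := by
    have hexp : etaR s s = (w 0)^2 * etaR u u - 2 * (w 0) * (u 0) * etaR u w
        + (u 0)^2 * etaR w w := by
      unfold etaR
      rw [Finset.mul_sum, Finset.mul_sum, Finset.mul_sum, ← Finset.sum_sub_distrib, ← Finset.sum_add_distrib]
      refine Finset.sum_congr rfl fun i _ => ?_
      by_cases h : (i : ℕ) = 0 <;> simp [hs, h] <;> ring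
    rw [hexp, huu, hww, huw]; ring
  have hsz : s = 0 := null_time_zero s hs0 hss
  refine ⟨w 0 / u 0, ?_⟩
  funext i
  have : w 0 * u i - u 0 * w i = 0 := by
    have := congrFun hsz i
    simpa [hs] using this
  rw [Pi.smul_apply, smul_eq_mul]; field_simp
  linarith

/-- A real eigenvalue of a real matrix (here `η F`) has a real eigenvector. -/
lemma exists_real_eigenvector {n : ℕ} (F : Matrix (Fin (n+1)) (Fin (n+1)) ℝ) (a : ℝ)
    (h : HasEigenvalue' (sharp F) (a : ℂ)) :
    ∃ u : Fin (n+1) → ℝ, u ≠ 0 ∧ (eta n * F) *ᵥ u = a • u := by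
  obtain ⟨v, hv0, hv⟩ := h
  set M := eta n * F with hM
  have hsharp : sharp F = M.map Complex.ofReal := by rw [sharp, eta_inv]
  rw [hsharp] at hv
  have key : ∀ i : Fin (n+1), ∑ j, (M i j : ℂ) * v j = (a : ℂ) * v i := by
    intro i
    simpa [Matrix.mulVec, dotProduct, Matrix.map_apply] using congrFun hv i
  have hre : M *ᵥ (fun i => (v i).re) = a • (fun i => (v i).re) := by
    funext i
    have := congrArg Complex.re (key i)
    simpa [Complex.re_sum, Complex.re_ofReal_mul, Matrix.mulVec, dotProduct]
      using this
  have him : M *ᵥ (fun i => (v i).im) = a • (fun i => (v i).im) := by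
    funext i
    have := congrArg Complex.im (key i)
    simpa [Complex.im_sum, Complex.im_ofReal_mul, Matrix.mulVec, dotProduct]
      using this
  obtain ⟨i, hi⟩ := Function.ne_iff.mp hv0
  by_cases hr : (v i).re = 0
  · have him0 : (v i).im ≠ 0 := by
      intro h0
      exact hi (Complex.ext hr h0)
    exact ⟨fun i => (v i).im, fun hz => him0 (by simpa using congrFun hz i), him⟩
  · exact ⟨fun i => (v i).re, fun hz => hr (by simpa using congrFun hz i), hre⟩

/-- If `♯F` has a nonzero real eigenvalue `a`, then every nonzero real
eigenvalue `a′` of `♯F` equals `a` or `−a`. -/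
theorem real_eigenvalues_plus_minus (n : ℕ)
    (F : Matrix (Fin (n+1)) (Fin (n+1)) ℝ) (hF : Fᵀ = -F)
    (a a' : ℝ) (ha : a ≠ 0) (ha' : a' ≠ 0)
    (h : HasEigenvalue' (sharp F) (a : ℂ))
    (h' : HasEigenvalue' (sharp F) (a' : ℂ)) :
    a' = a ∨ a' = -a := by
  obtain ⟨u, hu0, hu⟩ := exists_real_eigenvector F a h
  obtain ⟨w, hw0, hw⟩ := exists_real_eigenvector F a' h'
  by_cases hpm : a' = -a
  · exact Or.inr hpm
  -- u is null
  have huu : etaR u u = 0 := by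
    have := skew F hF u u
    rw [hu, etaR_smul_left, etaR_smul_right] at this
    have h2 : 2 * a * etaR u u = 0 := by linarith
    have := mul_eq_zero.mp h2
    rcases this with h3 | h3
    · rcases mul_eq_zero.mp h3 with h4 | h4
      · norm_num at h4
      · exact absurd h4 ha
    · exact h3
  -- w is null
  have hww : etaR w w = 0 := by
    have := skew F hF w w
    rw [hw, etaR_smul_left, etaR_smul_right] at this
    have h2 : 2 * a' * etaR w w = 0 := by linarith
    rcases mul_eq_zero.mp h2 with h3 | h3
    · rcases mul_eq_zero.mp h3 with h4 | h4
      · norm_num at h4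
      · exact absurd h4 ha'
    · exact h3
  -- orthogonality
  have huw : etaR u w = 0 := by
    have := skew F hF u w
    rw [hu, hw, etaR_smul_left, etaR_smul_right] at this
    have hsum : (a + a') * etaR u w = 0 := by linarith
    rcases mul_eq_zero.mp hsum with h3 | h3
    · exfalso; apply hpm; linarith
    · exact h3
  obtain ⟨c, hc⟩ := null_orthogonal_dependent u w hu0 huu hww huw
  have hmw : (eta n * F) *ᵥ w = a • w := by
    rw [hc, Matrix.mulVec_smul, hu, smul_smul, smul_smul, mul_comm]
  rw [hmw] at hw
  obtain ⟨i, hi⟩ := Function.ne_iff.mp hw0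
  have : a * w i = a' * w i := by
    have := congrFun hw i
    simpa using this
  left
  rw [mul_eq_mul_right_iff] at this
  rcases this with h3 | h3
  · exact h3.symm
  · exact absurd h3 hi
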